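/- Primal characterization of the restricted Lagrangian dual (Lemma 2): if X ⊆ ℝⁿ is the union of finitely many polyhedra (e.g., a bounded mixed-integer linear set) that is compact and nonempty, then z^{RLD} := sup_{α ∈ ℝᴷ} inf_{x ∈ X} ( cᵀx + (Gα)ᵀ(d − Dx) ) equals min { cᵀx : x ∈ conv(X), Gᵀ(Dx − d) = 0 }, provided the latter feasible set is nonempty. -/

import Mathlib

open scoped Matrix

noncomputable def lagrangianValue {n m : ℕ} (X : Set (Fin n → ℝ)) (c : Fin n → ℝ)
    (D : Matrix (Fin m) (Fin n) ℝ) (d : Fin m → ℝ) (lam : Fin m → ℝ) : EReal :=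
  ⨅ x ∈ X, ((c ⬝ᵥ x + lam ⬝ᵥ (d - D.mulVec x) : ℝ) : EReal)

/-!
The Lagrangian is affine in `x`, so its infimum over `X` is its infimum over `conv X`; evaluating
it at a minimizer `x₀` of the primal problem gives weak duality. Conversely, for `ε > 0` the point
`(Gᵀd, cᵀx₀ - ε)` lies outside the compact convex set `{(GᵀDx, cᵀx) : x ∈ conv X}`. A hyperplane
separating them has a negative last coordinate, and normalizing it yields `α` whose Lagrangian
value exceeds `cᵀx₀ - ε`.
-/

section LagrangeDuality

variable {E F : Type*} [TopologicalSpace E] [AddCommGroup E] [Module ℝ E]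
  [NormedAddCommGroup F] [NormedSpace ℝ F]

theorem exists_dual_lt_add_of_isMinOn {C : Set E} (hconv : Convex ℝ C) (hcomp : IsCompact C)
    (ℓ : E →L[ℝ] ℝ) (A : E →L[ℝ] F) {b : F} {x₀ : E} (hx₀ : x₀ ∈ C ∩ A ⁻¹' {b})
    (hmin : IsMinOn ℓ (C ∩ A ⁻¹' {b}) x₀) {ε : ℝ} (hε : 0 < ε) :
    ∃ φ : F →L[ℝ] ℝ, ∀ x ∈ C, ℓ x₀ - ε < ℓ x + φ (b - A x) := by
  set P : E →L[ℝ] F × ℝ := A.prod ℓ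
  have hp : (b, ℓ x₀ - ε) ∉ P '' C := by
    rintro ⟨x, hx, hPx⟩
    simp only [P, ContinuousLinearMap.prod_apply, Prod.mk.injEq] at hPx
    linarith [isMinOn_iff.1 hmin x ⟨hx, hPx.1⟩, hPx.2]
  obtain ⟨f, u, hfC, hfp⟩ := geometric_hahn_banach_closed_point
    (hconv.linear_image P.toLinearMap) (hcomp.image P.continuous).isClosed hp
  set g := f.comp (ContinuousLinearMap.inl ℝ F ℝ)
  set β := f (0, 1)
  have hf : ∀ y r, f (y, r) = g y + r * β := fun y r => by
    rw [show (y, r) = (y, 0) + r • ((0 : F), (1 : ℝ)) by simp, map_add, map_smul, smul_eq_mul]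
    rfl
  have hfP : ∀ x ∈ C, g (A x) + ℓ x * β < u := fun x hx => hf _ _ ▸ hfC _ ⟨x, hx, rfl⟩
  rw [hf] at hfp
  have hβ : β < 0 := by
    have := hfP x₀ hx₀.1
    rw [hx₀.2] at this
    nlinarith
  refine ⟨(-β)⁻¹ • g, fun x hx => ?_⟩
  have key : (-β) * (ℓ x₀ - ε - ℓ x) < g b - g (A x) := by linarith [hfP x hx]
  rw [← lt_inv_mul_iff₀ (neg_pos.2 hβ)] at key
  simp only [FunLike.coe_smul, Pi.smul_apply, map_sub, smul_eq_mul]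
  linarith

end LagrangeDuality

section MatrixIdentities

variable {R ι κ μ : Type*} [CommRing R] [Fintype ι] [Fintype κ]

theorem dotProduct_add_dotProduct_sub_mulVec (c : ι → R) (D : Matrix κ ι R) (d lam : κ → R)
    (x : ι → R) : c ⬝ᵥ x + lam ⬝ᵥ (d - D *ᵥ x) = (c - lam ᵥ* D) ⬝ᵥ x + lam ⬝ᵥ d := by
  rw [dotProduct_sub, Matrix.dotProduct_mulVec, sub_dotProduct]
  ring

theorem mulVec_dotProduct_sub_mulVec [Fintype μ] (G : Matrix κ μ R) (D : Matrix κ ι R)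
    (d : κ → R) (α : μ → R) (x : ι → R) :
    G *ᵥ α ⬝ᵥ (d - D *ᵥ x) = α ⬝ᵥ (Gᵀ *ᵥ d - (Gᵀ * D) *ᵥ x) := by
  rw [← Matrix.mulVec_mulVec, ← Matrix.mulVec_sub, Matrix.dotProduct_mulVec,
    Matrix.vecMul_transpose]

theorem transpose_mulVec_sub_eq_zero_iff (G : Matrix κ μ R) (D : Matrix κ ι R) (d : κ → R)
    (x : ι → R) : Gᵀ *ᵥ (D *ᵥ x - d) = 0 ↔ (Gᵀ * D) *ᵥ x = Gᵀ *ᵥ d := by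
  rw [Matrix.mulVec_sub, sub_eq_zero, Matrix.mulVec_mulVec]

end MatrixIdentities

section RestrictedLagrangian

variable {n m K : ℕ}

theorem lagrangianValue_le_of_mem_convexHull {X : Set (Fin n → ℝ)} (c : Fin n → ℝ)
    (D : Matrix (Fin m) (Fin n) ℝ) (d lam : Fin m → ℝ) {x : Fin n → ℝ}
    (hx : x ∈ convexHull ℝ X) :
    lagrangianValue X c D d lam ≤ ((c ⬝ᵥ x + lam ⬝ᵥ (d - D *ᵥ x) : ℝ) : EReal) := by
  have hconc : ConcaveOn ℝ Set.univ fun x => c ⬝ᵥ x + lam ⬝ᵥ (d - D *ᵥ x) := by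
    simp_rw [dotProduct_add_dotProduct_sub_mulVec]
    exact ((dotProductEquiv ℝ (Fin n) (c - lam ᵥ* D)).concaveOn convex_univ).add_const _
  obtain ⟨y, hy, hle⟩ := hconc.exists_le_of_mem_convexHull (Set.subset_univ X) hx
  exact (iInf₂_le y hy).trans (EReal.coe_le_coe_iff.2 hle)

theorem lagrangianValue_mulVec_le {X : Set (Fin n → ℝ)} {c : Fin n → ℝ}
    {D : Matrix (Fin m) (Fin n) ℝ} {d : Fin m → ℝ} {G : Matrix (Fin m) (Fin K) ℝ}
    {x : Fin n → ℝ} (hx : x ∈ convexHull ℝ X) (hAx : (Gᵀ * D) *ᵥ x = Gᵀ *ᵥ d) (α : Fin K → ℝ) :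
    lagrangianValue X c D d (G *ᵥ α) ≤ ((c ⬝ᵥ x : ℝ) : EReal) := by
  calc lagrangianValue X c D d (G *ᵥ α)
      ≤ ((c ⬝ᵥ x + G *ᵥ α ⬝ᵥ (d - D *ᵥ x) : ℝ) : EReal) :=
        lagrangianValue_le_of_mem_convexHull c D d _ hx
    _ = ((c ⬝ᵥ x : ℝ) : EReal) := by
        rw [mulVec_dotProduct_sub_mulVec, hAx, sub_self, dotProduct_zero, add_zero]

theorem exists_le_lagrangianValue_mulVec {X : Set (Fin n → ℝ)} {c : Fin n → ℝ}
    {D : Matrix (Fin m) (Fin n) ℝ} {d : Fin m → ℝ} {G : Matrix (Fin m) (Fin K) ℝ}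
    (hC : IsCompact (convexHull ℝ X)) {x₀ : Fin n → ℝ}
    (hx₀ : x₀ ∈ convexHull ℝ X ∩ {x | (Gᵀ * D) *ᵥ x = Gᵀ *ᵥ d})
    (hmin : IsMinOn (c ⬝ᵥ ·) (convexHull ℝ X ∩ {x | (Gᵀ * D) *ᵥ x = Gᵀ *ᵥ d}) x₀)
    {r : ℝ} (hr : r < c ⬝ᵥ x₀) :
    ∃ α : Fin K → ℝ, (r : EReal) ≤ lagrangianValue X c D d (G *ᵥ α) := by
  obtain ⟨φ, hφ⟩ := exists_dual_lt_add_of_isMinOn (convex_convexHull ℝ X) hC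
    (LinearMap.toContinuousLinearMap (dotProductEquiv ℝ (Fin n) c))
    (LinearMap.toContinuousLinearMap (Gᵀ * D).mulVecLin) hx₀ hmin (sub_pos.2 hr)
  set α := (dotProductEquiv ℝ (Fin K)).symm φ.toLinearMap
  have hα : ∀ y, α ⬝ᵥ y = φ y := fun y =>
    LinearMap.congr_fun ((dotProductEquiv ℝ (Fin K)).apply_symm_apply φ.toLinearMap) y
  refine ⟨α, le_iInf₂ fun x hx => EReal.coe_le_coe ?_⟩
  have := hφ x (subset_convexHull ℝ X hx)
  simp only [LinearMap.coe_toContinuousLinearMap', dotProductEquiv_apply_apply,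
    Matrix.mulVecLin_apply] at this
  rw [mulVec_dotProduct_sub_mulVec, hα]
  linarith

end RestrictedLagrangian

theorem restricted_dual_primal_characterization_general {n m K : ℕ} (X : Set (Fin n → ℝ))
    (hpoly : ∃ s : Finset (Fin n → ℝ), convexHull ℝ X = convexHull ℝ (s : Set (Fin n → ℝ)))
    (c : Fin n → ℝ) (D : Matrix (Fin m) (Fin n) ℝ) (d : Fin m → ℝ)
    (G : Matrix (Fin m) (Fin K) ℝ)
    (hfeas : ∃ x ∈ convexHull ℝ X, G.transpose.mulVec (D.mulVec x - d) = 0) :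
    (⨆ α : Fin K → ℝ, lagrangianValue X c D d (G.mulVec α)) =
      ⨅ x ∈ {x ∈ convexHull ℝ X | G.transpose.mulVec (D.mulVec x - d) = 0},
        ((c ⬝ᵥ x : ℝ) : EReal) := by
  obtain ⟨s, hs⟩ := hpoly
  have hC : IsCompact (convexHull ℝ X) := hs ▸ s.finite_toSet.isCompact_convexHull ℝ
  have hS : {x ∈ convexHull ℝ X | Gᵀ *ᵥ (D *ᵥ x - d) = 0} =
      convexHull ℝ X ∩ {x | (Gᵀ * D) *ᵥ x = Gᵀ *ᵥ d} :=
    Set.ext fun x => and_congr_right' (transpose_mulVec_sub_eq_zero_iff G D d x)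
  have hSc : IsCompact (convexHull ℝ X ∩ {x | (Gᵀ * D) *ᵥ x = Gᵀ *ᵥ d}) :=
    hC.inter_right (isClosed_eq (Continuous.matrix_mulVec continuous_const continuous_id)
      continuous_const)
  obtain ⟨x₀, hx₀, hmin⟩ := hSc.exists_isMinOn (hS ▸ hfeas)
    (continuous_const.dotProduct continuous_id).continuousOn
  rw [hS, le_antisymm (iInf₂_le x₀ hx₀) (le_iInf₂ fun x hx => EReal.coe_le_coe (hmin hx))]
  refine iSup_eq_of_forall_le_of_forall_lt_exists_gt (lagrangianValue_mulVec_le hx₀.1 hx₀.2)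
    fun w hw => ?_
  obtain ⟨r, hwr, hrv⟩ := EReal.lt_iff_exists_real_btwn.1 hw
  obtain ⟨α, hα⟩ := exists_le_lagrangianValue_mulVec hC hx₀ hmin (EReal.coe_lt_coe_iff.1 hrv)
  exact ⟨α, hwr.trans_le hα⟩

/-- Primal characterization of the restricted Lagrangian dual (Lemma 2). -/
theorem restricted_dual_primal_characterization {n m K : ℕ} (X : Set (Fin n → ℝ))
    (hX : X.Nonempty) (hcomp : IsCompact X)
    (hpoly : ∃ s : Finset (Fin n → ℝ), convexHull ℝ X = convexHull ℝ (s : Set (Fin n → ℝ)))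
    (c : Fin n → ℝ) (D : Matrix (Fin m) (Fin n) ℝ) (d : Fin m → ℝ)
    (G : Matrix (Fin m) (Fin K) ℝ)
    (hfeas : ∃ x ∈ convexHull ℝ X, G.transpose.mulVec (D.mulVec x - d) = 0) :
    (⨆ α : Fin K → ℝ, lagrangianValue X c D d (G.mulVec α)) =
      ⨅ x ∈ {x ∈ convexHull ℝ X | G.transpose.mulVec (D.mulVec x - d) = 0},
        ((c ⬝ᵥ x : ℝ) : EReal) :=
  restricted_dual_primal_characterization_general X hpoly c D d G hfeas
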